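/- Under the Legendre transformation ζ₁ = ψ_q, ζ̄₁ = ψ_{q̄}, u = qψ_q + q̄ψ_{q̄} − ψ, u_{ζ₁} = q, u_{ζ̄₁} = q̄ (with z₂ = z, z̄₂ = z̄), the equation u_{ζ₁ζ̄₁}u_{2 2̄} − u_{ζ₁2̄}u_{ζ̄₁2} = −e^{ζ₁+ζ̄₁} transforms into ψ_{q q̄}ψ_{z z̄} − ψ_{q z̄}ψ_{q̄ z} = e^{ψ_q + ψ_{q̄}}(ψ_{q q̄}² − ψ_{qq}ψ_{q̄ q̄}). Specifically, if ψ is a smooth function with nondegenerate Hessian in (q, q̄) (so the Legendre transform is well-defined locally) and u is its Legendre transform, then u satisfies the first equation if and only if ψ satisfies the second. -/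

import Mathlib

/-!
Differentiating the inversion identities `ψ_q(Q, Q̄, z, z̄) = ζ₁`, `ψ_q̄(Q, Q̄, z, z̄) = ζ̄₁`
shows that `H⁻¹`, with `H` the `(q, q̄)`-Hessian of `ψ`, maps `(0, 1)`, `-(ψ_{qz}, ψ_{q̄z})` and
`-(ψ_{qz̄}, ψ_{q̄z̄})` to the `ζ̄₁`-, `z`- and `z̄`-derivatives of `(Q, Q̄)`, while the envelope
identities `u_{ζ₁} = Q`, `u_{ζ̄₁} = Q̄`, `u_z = -ψ_z` express the second derivatives of `u`
through them. Cramer's rule then gives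
`det H · (u_{ζ₁ζ̄₁}u_{zz̄} − u_{ζ₁z̄}u_{ζ̄₁z}) = ψ_{qq̄}ψ_{zz̄} − ψ_{qz̄}ψ_{q̄z}`,
and since `det H ≠ 0` the two equations are equivalent.
-/

noncomputable section

/-- Functions of the four independent complex variables (z₁, z̄₁, z₂, z̄₂). -/
abbrev F4 := ℂ → ℂ → ℂ → ℂ → ℂ

/-- Partial derivative in the 1st slot (z₁, resp. q). -/
def D1 (f : F4) : F4 := fun a b c d => deriv (fun t => f t b c d) a
/-- Partial derivative in the 2nd slot (z̄₁, resp. q̄). -/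
def D2 (f : F4) : F4 := fun a b c d => deriv (fun t => f a t c d) b
/-- Partial derivative in the 3rd slot (z₂, resp. z). -/
def D3 (f : F4) : F4 := fun a b c d => deriv (fun t => f a b t d) c
/-- Partial derivative in the 4th slot (z̄₂, resp. z̄). -/
def D4 (f : F4) : F4 := fun a b c d => deriv (fun t => f a b c t) d

/-- Smoothness of a function of the four complex variables. -/
def Sm (f : F4) : Prop :=
  ContDiff ℂ ⊤ (fun p : ℂ × ℂ × ℂ × ℂ => f p.1 p.2.1 p.2.2.1 p.2.2.2)

open ContinuousLinearMap in
theorem ContDiffAt.fderiv_fderiv_apply_comm {𝕜 E F : Type*} [NontriviallyNormedField 𝕜]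
    [NormedAddCommGroup E] [NormedSpace 𝕜 E] [NormedAddCommGroup F] [NormedSpace 𝕜 F]
    {f : E → F} {x : E} {n : WithTop ℕ∞} (hf : ContDiffAt 𝕜 n f x) (hn : minSmoothness 𝕜 2 ≤ n)
    (v w : E) :
    fderiv 𝕜 (fun y => fderiv 𝕜 f y v) x w = fderiv 𝕜 (fun y => fderiv 𝕜 f y w) x v := by
  have hf' : DifferentiableAt 𝕜 (fderiv 𝕜 f) x :=
    (hf.fderiv_right (m := 1) (le_minSmoothness.trans hn)).differentiableAt one_ne_zero
  have happly (v : E) :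
      fderiv 𝕜 (fun y => fderiv 𝕜 f y v) x = (apply 𝕜 F v).comp (fderiv 𝕜 (fderiv 𝕜 f) x) :=
    ((apply 𝕜 F v).hasFDerivAt.comp x hf'.hasFDerivAt).fderiv
  simpa [happly] using ((hf.isSymmSndFDerivAt hn).eq v w).symm

theorem hasDerivAt_tuple4 {g₁ g₂ g₃ g₄ : ℂ → ℂ} {g₁' g₂' g₃' g₄' t : ℂ}
    (h₁ : HasDerivAt g₁ g₁' t) (h₂ : HasDerivAt g₂ g₂' t) (h₃ : HasDerivAt g₃ g₃' t)
    (h₄ : HasDerivAt g₄ g₄' t) :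
    HasDerivAt (fun s => (g₁ s, g₂ s, g₃ s, g₄ s)) (g₁', g₂', g₃', g₄') t :=
  h₁.prodMk (h₂.prodMk (h₃.prodMk h₄))

def uncurry4 (f : F4) : ℂ × ℂ × ℂ × ℂ → ℂ := fun p => f p.1 p.2.1 p.2.2.1 p.2.2.2

section Smooth

variable {f : F4}

theorem Sm.hasDerivAt_comp (hf : Sm f) {g : ℂ → ℂ × ℂ × ℂ × ℂ} {g' : ℂ × ℂ × ℂ × ℂ} {t : ℂ}
    (hg : HasDerivAt g g' t) :
    HasDerivAt (fun s => uncurry4 f (g s)) (fderiv ℂ (uncurry4 f) (g t) g') t :=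
  ((hf.differentiable (by simp) (g t)).hasFDerivAt).comp_hasDerivAt t hg

theorem Sm.hasDerivAt_D1 (hf : Sm f) (a b c d : ℂ) :
    HasDerivAt (fun t => f t b c d) (D1 f a b c d) a :=
  (hf.hasDerivAt_comp (hasDerivAt_tuple4 (hasDerivAt_id' a) (hasDerivAt_const a b)
    (hasDerivAt_const a c) (hasDerivAt_const a d))).differentiableAt.hasDerivAt

theorem Sm.hasDerivAt_D2 (hf : Sm f) (a b c d : ℂ) :
    HasDerivAt (fun t => f a t c d) (D2 f a b c d) b :=
  (hf.hasDerivAt_comp (hasDerivAt_tuple4 (hasDerivAt_const b a) (hasDerivAt_id' b)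
    (hasDerivAt_const b c) (hasDerivAt_const b d))).differentiableAt.hasDerivAt

theorem Sm.hasDerivAt_D3 (hf : Sm f) (a b c d : ℂ) :
    HasDerivAt (fun t => f a b t d) (D3 f a b c d) c :=
  (hf.hasDerivAt_comp (hasDerivAt_tuple4 (hasDerivAt_const c a) (hasDerivAt_const c b)
    (hasDerivAt_id' c) (hasDerivAt_const c d))).differentiableAt.hasDerivAt

theorem Sm.hasDerivAt_D4 (hf : Sm f) (a b c d : ℂ) :
    HasDerivAt (fun t => f a b c t) (D4 f a b c d) d :=
  (hf.hasDerivAt_comp (hasDerivAt_tuple4 (hasDerivAt_const d a) (hasDerivAt_const d b)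
    (hasDerivAt_const d c) (hasDerivAt_id' d))).differentiableAt.hasDerivAt

theorem Sm.D1_eq_fderiv (hf : Sm f) (a b c d : ℂ) :
    D1 f a b c d = fderiv ℂ (uncurry4 f) (a, b, c, d) (1, 0, 0, 0) :=
  (hf.hasDerivAt_comp (hasDerivAt_tuple4 (hasDerivAt_id' a) (hasDerivAt_const a b)
    (hasDerivAt_const a c) (hasDerivAt_const a d))).deriv

theorem Sm.D2_eq_fderiv (hf : Sm f) (a b c d : ℂ) :
    D2 f a b c d = fderiv ℂ (uncurry4 f) (a, b, c, d) (0, 1, 0, 0) :=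
  (hf.hasDerivAt_comp (hasDerivAt_tuple4 (hasDerivAt_const b a) (hasDerivAt_id' b)
    (hasDerivAt_const b c) (hasDerivAt_const b d))).deriv

theorem Sm.D3_eq_fderiv (hf : Sm f) (a b c d : ℂ) :
    D3 f a b c d = fderiv ℂ (uncurry4 f) (a, b, c, d) (0, 0, 1, 0) :=
  (hf.hasDerivAt_comp (hasDerivAt_tuple4 (hasDerivAt_const c a) (hasDerivAt_const c b)
    (hasDerivAt_id' c) (hasDerivAt_const c d))).deriv

theorem Sm.D4_eq_fderiv (hf : Sm f) (a b c d : ℂ) :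
    D4 f a b c d = fderiv ℂ (uncurry4 f) (a, b, c, d) (0, 0, 0, 1) :=
  (hf.hasDerivAt_comp (hasDerivAt_tuple4 (hasDerivAt_const d a) (hasDerivAt_const d b)
    (hasDerivAt_const d c) (hasDerivAt_id' d))).deriv

theorem Sm.fderiv_apply_eq (hf : Sm f) (a b c d : ℂ) (v : ℂ × ℂ × ℂ × ℂ) :
    fderiv ℂ (uncurry4 f) (a, b, c, d) v =
      D1 f a b c d * v.1 + D2 f a b c d * v.2.1 + D3 f a b c d * v.2.2.1
        + D4 f a b c d * v.2.2.2 := by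
  obtain ⟨v₁, v₂, v₃, v₄⟩ := v
  have hv : ((v₁, v₂, v₃, v₄) : ℂ × ℂ × ℂ × ℂ) = v₁ • (1, 0, 0, 0) + v₂ • (0, 1, 0, 0)
      + v₃ • (0, 0, 1, 0) + v₄ • (0, 0, 0, 1) := by
    simp
  rw [hf.D1_eq_fderiv, hf.D2_eq_fderiv, hf.D3_eq_fderiv, hf.D4_eq_fderiv]
  conv_lhs => rw [hv]
  simp only [map_add, map_smul, smul_eq_mul]
  ring

theorem Sm.hasDerivAt_comp₄ (hf : Sm f) {g₁ g₂ g₃ g₄ : ℂ → ℂ} {g₁' g₂' g₃' g₄' t : ℂ}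
    (h₁ : HasDerivAt g₁ g₁' t) (h₂ : HasDerivAt g₂ g₂' t) (h₃ : HasDerivAt g₃ g₃' t)
    (h₄ : HasDerivAt g₄ g₄' t) :
    HasDerivAt (fun s => f (g₁ s) (g₂ s) (g₃ s) (g₄ s))
      (D1 f (g₁ t) (g₂ t) (g₃ t) (g₄ t) * g₁' + D2 f (g₁ t) (g₂ t) (g₃ t) (g₄ t) * g₂'
        + D3 f (g₁ t) (g₂ t) (g₃ t) (g₄ t) * g₃' + D4 f (g₁ t) (g₂ t) (g₃ t) (g₄ t) * g₄') t :=
  (hf.hasDerivAt_comp (hasDerivAt_tuple4 h₁ h₂ h₃ h₄)).congr_deriv (hf.fderiv_apply_eq _ _ _ _ _)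

theorem Sm.uncurry4_D1 (hf : Sm f) :
    uncurry4 (D1 f) = fun p => fderiv ℂ (uncurry4 f) p (1, 0, 0, 0) :=
  funext fun p => hf.D1_eq_fderiv p.1 p.2.1 p.2.2.1 p.2.2.2

theorem Sm.uncurry4_D2 (hf : Sm f) :
    uncurry4 (D2 f) = fun p => fderiv ℂ (uncurry4 f) p (0, 1, 0, 0) :=
  funext fun p => hf.D2_eq_fderiv p.1 p.2.1 p.2.2.1 p.2.2.2

theorem Sm.uncurry4_D3 (hf : Sm f) :
    uncurry4 (D3 f) = fun p => fderiv ℂ (uncurry4 f) p (0, 0, 1, 0) :=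
  funext fun p => hf.D3_eq_fderiv p.1 p.2.1 p.2.2.1 p.2.2.2

theorem Sm.contDiff_fderiv_apply (hf : Sm f) (v : ℂ × ℂ × ℂ × ℂ) :
    ContDiff ℂ ⊤ (fun p => fderiv ℂ (uncurry4 f) p v) :=
  (ContinuousLinearMap.apply ℂ ℂ v).contDiff.comp (hf.fderiv_right le_rfl)

theorem Sm.sm_D1 (hf : Sm f) : Sm (D1 f) :=
  show ContDiff ℂ ⊤ (uncurry4 (D1 f)) from hf.uncurry4_D1 ▸ hf.contDiff_fderiv_apply _

theorem Sm.sm_D2 (hf : Sm f) : Sm (D2 f) :=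
  show ContDiff ℂ ⊤ (uncurry4 (D2 f)) from hf.uncurry4_D2 ▸ hf.contDiff_fderiv_apply _

theorem Sm.sm_D3 (hf : Sm f) : Sm (D3 f) :=
  show ContDiff ℂ ⊤ (uncurry4 (D3 f)) from hf.uncurry4_D3 ▸ hf.contDiff_fderiv_apply _

theorem Sm.fderiv_fderiv_apply_comm (hf : Sm f) (p v w : ℂ × ℂ × ℂ × ℂ) :
    fderiv ℂ (fun q => fderiv ℂ (uncurry4 f) q v) p w =
      fderiv ℂ (fun q => fderiv ℂ (uncurry4 f) q w) p v :=
  hf.contDiffAt.fderiv_fderiv_apply_comm le_top v w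

theorem Sm.D1_D2_comm (hf : Sm f) (a b c d : ℂ) : D1 (D2 f) a b c d = D2 (D1 f) a b c d := by
  rw [hf.sm_D2.D1_eq_fderiv, hf.sm_D1.D2_eq_fderiv, hf.uncurry4_D1, hf.uncurry4_D2]
  exact hf.fderiv_fderiv_apply_comm _ _ _

theorem Sm.D1_D3_comm (hf : Sm f) (a b c d : ℂ) : D1 (D3 f) a b c d = D3 (D1 f) a b c d := by
  rw [hf.sm_D3.D1_eq_fderiv, hf.sm_D1.D3_eq_fderiv, hf.uncurry4_D1, hf.uncurry4_D3]
  exact hf.fderiv_fderiv_apply_comm _ _ _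

theorem Sm.D2_D3_comm (hf : Sm f) (a b c d : ℂ) : D2 (D3 f) a b c d = D3 (D2 f) a b c d := by
  rw [hf.sm_D3.D2_eq_fderiv, hf.sm_D2.D3_eq_fderiv, hf.uncurry4_D2, hf.uncurry4_D3]
  exact hf.fderiv_fderiv_apply_comm _ _ _

end Smooth

theorem HasDerivAt.eq_zero_of_eq_const {𝕜 F : Type*} [NontriviallyNormedField 𝕜]
    [NormedAddCommGroup F] [NormedSpace 𝕜 F] {f : 𝕜 → F} {f' c : F} {x : 𝕜}
    (hf : HasDerivAt f f' x) (hc : f = fun _ => c) : f' = 0 := by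
  subst hc
  exact hf.unique (hasDerivAt_const x c)

def subst12 (g Q Qb : F4) : F4 := fun ζ ζb z w => g (Q ζ ζb z w) (Qb ζ ζb z w) z w

section Subst

variable {g Q Qb : F4}

theorem Sm.hasDerivAt_subst12_slot1 (hg : Sm g) (hQ : Sm Q) (hQb : Sm Qb) (a b c d : ℂ) :
    HasDerivAt (fun t => subst12 g Q Qb t b c d)
      (D1 g (Q a b c d) (Qb a b c d) c d * D1 Q a b c d
        + D2 g (Q a b c d) (Qb a b c d) c d * D1 Qb a b c d) a := by
  simpa [subst12] using hg.hasDerivAt_comp₄ (hQ.hasDerivAt_D1 a b c d) (hQb.hasDerivAt_D1 a b c d)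
    (hasDerivAt_const a c) (hasDerivAt_const a d)

theorem Sm.hasDerivAt_subst12_slot2 (hg : Sm g) (hQ : Sm Q) (hQb : Sm Qb) (a b c d : ℂ) :
    HasDerivAt (fun t => subst12 g Q Qb a t c d)
      (D1 g (Q a b c d) (Qb a b c d) c d * D2 Q a b c d
        + D2 g (Q a b c d) (Qb a b c d) c d * D2 Qb a b c d) b := by
  simpa [subst12] using hg.hasDerivAt_comp₄ (hQ.hasDerivAt_D2 a b c d) (hQb.hasDerivAt_D2 a b c d)
    (hasDerivAt_const b c) (hasDerivAt_const b d)

theorem Sm.hasDerivAt_subst12_slot3 (hg : Sm g) (hQ : Sm Q) (hQb : Sm Qb) (a b c d : ℂ) :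
    HasDerivAt (fun t => subst12 g Q Qb a b t d)
      (D1 g (Q a b c d) (Qb a b c d) c d * D3 Q a b c d
        + D2 g (Q a b c d) (Qb a b c d) c d * D3 Qb a b c d
        + D3 g (Q a b c d) (Qb a b c d) c d) c := by
  simpa [subst12] using hg.hasDerivAt_comp₄ (hQ.hasDerivAt_D3 a b c d) (hQb.hasDerivAt_D3 a b c d)
    (hasDerivAt_id' c) (hasDerivAt_const c d)

theorem Sm.hasDerivAt_subst12_slot4 (hg : Sm g) (hQ : Sm Q) (hQb : Sm Qb) (a b c d : ℂ) :
    HasDerivAt (fun t => subst12 g Q Qb a b c t)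
      (D1 g (Q a b c d) (Qb a b c d) c d * D4 Q a b c d
        + D2 g (Q a b c d) (Qb a b c d) c d * D4 Qb a b c d
        + D4 g (Q a b c d) (Qb a b c d) c d) d := by
  simpa [subst12] using hg.hasDerivAt_comp₄ (hQ.hasDerivAt_D4 a b c d) (hQb.hasDerivAt_D4 a b c d)
    (hasDerivAt_const d c) (hasDerivAt_id' d)

end Subst

structure IsLegendreTransform (ψ Q Qb u : F4) : Prop where
  D1_inverse : ∀ ζ ζb z w, D1 ψ (Q ζ ζb z w) (Qb ζ ζb z w) z w = ζ
  D2_inverse : ∀ ζ ζb z w, D2 ψ (Q ζ ζb z w) (Qb ζ ζb z w) z w = ζb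
  u_eq : ∀ ζ ζb z w, u ζ ζb z w = Q ζ ζb z w * ζ + Qb ζ ζb z w * ζb - subst12 ψ Q Qb ζ ζb z w

namespace IsLegendreTransform

variable {ψ Q Qb u : F4}

theorem D1_eq (h : IsLegendreTransform ψ Q Qb u) (hψ : Sm ψ) (hQ : Sm Q) (hQb : Sm Qb) :
    D1 u = Q := by
  ext a b c d
  have hd := (((hQ.hasDerivAt_D1 a b c d).mul (hasDerivAt_id' a)).add
    ((hQb.hasDerivAt_D1 a b c d).mul_const b)).sub (hψ.hasDerivAt_subst12_slot1 hQ hQb a b c d)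
  show deriv (fun t => u t b c d) a = _
  simp only [h.u_eq]
  refine hd.deriv.trans ?_
  rw [h.D1_inverse, h.D2_inverse]
  ring

theorem D2_eq (h : IsLegendreTransform ψ Q Qb u) (hψ : Sm ψ) (hQ : Sm Q) (hQb : Sm Qb) :
    D2 u = Qb := by
  ext a b c d
  have hd := (((hQ.hasDerivAt_D2 a b c d).mul_const a).add
    ((hQb.hasDerivAt_D2 a b c d).mul (hasDerivAt_id' b))).sub
    (hψ.hasDerivAt_subst12_slot2 hQ hQb a b c d)
  show deriv (fun t => u a t c d) b = _
  simp only [h.u_eq]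
  refine hd.deriv.trans ?_
  rw [h.D1_inverse, h.D2_inverse]
  ring

theorem D3_eq (h : IsLegendreTransform ψ Q Qb u) (hψ : Sm ψ) (hQ : Sm Q) (hQb : Sm Qb) :
    D3 u = fun ζ ζb z w => -subst12 (D3 ψ) Q Qb ζ ζb z w := by
  ext a b c d
  have hd := (((hQ.hasDerivAt_D3 a b c d).mul_const a).add
    ((hQb.hasDerivAt_D3 a b c d).mul_const b)).sub (hψ.hasDerivAt_subst12_slot3 hQ hQb a b c d)
  show deriv (fun t => u a b t d) c = _
  simp only [h.u_eq]
  refine hd.deriv.trans ?_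
  rw [h.D1_inverse, h.D2_inverse, subst12]
  ring

theorem D4_D3_eq (h : IsLegendreTransform ψ Q Qb u) (hψ : Sm ψ) (hQ : Sm Q) (hQb : Sm Qb)
    (a b c d : ℂ) :
    D4 (D3 u) a b c d = -(D3 (D1 ψ) (Q a b c d) (Qb a b c d) c d * D4 Q a b c d
      + D3 (D2 ψ) (Q a b c d) (Qb a b c d) c d * D4 Qb a b c d
      + D4 (D3 ψ) (Q a b c d) (Qb a b c d) c d) := by
  rw [h.D3_eq hψ hQ hQb, ← hψ.D1_D3_comm, ← hψ.D2_D3_comm]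
  exact (hψ.sm_D3.hasDerivAt_subst12_slot4 hQ hQb a b c d).neg.deriv

theorem hessianDet_mul_minor (h : IsLegendreTransform ψ Q Qb u) (hψ : Sm ψ) (hQ : Sm Q)
    (hQb : Sm Qb) (ζ ζb z w : ℂ) :
    let q := Q ζ ζb z w
    let qb := Qb ζ ζb z w
    (D1 (D1 ψ) q qb z w * D2 (D2 ψ) q qb z w - D2 (D1 ψ) q qb z w ^ 2) *
        (D2 (D1 u) ζ ζb z w * D4 (D3 u) ζ ζb z w - D4 (D1 u) ζ ζb z w * D3 (D2 u) ζ ζb z w) =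
      D2 (D1 ψ) q qb z w * D4 (D3 ψ) q qb z w - D4 (D1 ψ) q qb z w * D3 (D2 ψ) q qb z w := by
  intro q qb
  have dinv1_slot2 := (hψ.sm_D1.hasDerivAt_subst12_slot2 hQ hQb ζ ζb z w).eq_zero_of_eq_const
    (funext fun t => h.D1_inverse ζ t z w)
  have dinv2_slot2 := (hψ.sm_D2.hasDerivAt_subst12_slot2 hQ hQb ζ ζb z w).unique
    ((hasDerivAt_id' ζb).congr_of_eventuallyEq (.of_forall fun t => h.D2_inverse ζ t z w))
  have dinv1_slot3 := (hψ.sm_D1.hasDerivAt_subst12_slot3 hQ hQb ζ ζb z w).eq_zero_of_eq_const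
    (funext fun t => h.D1_inverse ζ ζb t w)
  have dinv2_slot3 := (hψ.sm_D2.hasDerivAt_subst12_slot3 hQ hQb ζ ζb z w).eq_zero_of_eq_const
    (funext fun t => h.D2_inverse ζ ζb t w)
  have dinv1_slot4 := (hψ.sm_D1.hasDerivAt_subst12_slot4 hQ hQb ζ ζb z w).eq_zero_of_eq_const
    (funext fun t => h.D1_inverse ζ ζb z t)
  rw [hψ.D1_D2_comm] at dinv2_slot2 dinv2_slot3
  rw [h.D1_eq hψ hQ hQb, h.D2_eq hψ hQ hQb, h.D4_D3_eq hψ hQ hQb]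
  -- Cramer's rule: the first bracket solves for `Q_{ζ̄₁}`, the second for `Q̄_z`.
  linear_combination (-(D3 (D1 ψ) q qb z w * D4 Q ζ ζb z w + D3 (D2 ψ) q qb z w * D4 Qb ζ ζb z w
    + D4 (D3 ψ) q qb z w)) * (D2 (D2 ψ) q qb z w * dinv1_slot2 - D2 (D1 ψ) q qb z w * dinv2_slot2)
    - D4 Q ζ ζb z w * (D1 (D1 ψ) q qb z w * dinv2_slot3 - D2 (D1 ψ) q qb z w * dinv1_slot3)
    + D3 (D2 ψ) q qb z w * dinv1_slot4

end IsLegendreTransform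

theorem legendre_transform_of_hcma
    (ψ : F4) (hψ : Sm ψ)
    (Q Qb : F4) (hQ : Sm Q) (hQb : Sm Qb)
    -- Q, Qb invert the gradient map: ψ_q(Q,Qb,z,z̄) = ζ₁, ψ_q̄(Q,Qb,z,z̄) = ζ̄₁
    (hinv1 : ∀ ζ ζb z w : ℂ, D1 ψ (Q ζ ζb z w) (Qb ζ ζb z w) z w = ζ)
    (hinv2 : ∀ ζ ζb z w : ℂ, D2 ψ (Q ζ ζb z w) (Qb ζ ζb z w) z w = ζb)
    -- nondegeneracy of the Hessian of ψ in (q, q̄)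
    (hnondeg : ∀ q qb z w : ℂ,
      D1 (D1 ψ) q qb z w * D2 (D2 ψ) q qb z w - (D2 (D1 ψ) q qb z w) ^ 2 ≠ 0)
    (u : F4)
    (hu : ∀ ζ ζb z w : ℂ, u ζ ζb z w =
      Q ζ ζb z w * ζ + Qb ζ ζb z w * ζb - ψ (Q ζ ζb z w) (Qb ζ ζb z w) z w) :
    ∀ ζ ζb z w : ℂ,
      (D2 (D1 u) ζ ζb z w * D4 (D3 u) ζ ζb z w
         - D4 (D1 u) ζ ζb z w * D3 (D2 u) ζ ζb z w = -Complex.exp (ζ + ζb))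
      ↔
      (let q := Q ζ ζb z w
       let qb := Qb ζ ζb z w
       D2 (D1 ψ) q qb z w * D4 (D3 ψ) q qb z w
         - D4 (D1 ψ) q qb z w * D3 (D2 ψ) q qb z w
       = Complex.exp (D1 ψ q qb z w + D2 ψ q qb z w) *
           ((D2 (D1 ψ) q qb z w) ^ 2 - D1 (D1 ψ) q qb z w * D2 (D2 ψ) q qb z w)) := by
  intro ζ ζb z w
  have hL : IsLegendreTransform ψ Q Qb u := ⟨hinv1, hinv2, hu⟩
  have key := hL.hessianDet_mul_minor hψ hQ hQb ζ ζb z w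
  have hΔ := hnondeg (Q ζ ζb z w) (Qb ζ ζb z w) z w
  dsimp only at key ⊢
  rw [hinv1, hinv2]
  constructor
  · intro h
    rw [← key, h]
    ring
  · intro h
    apply mul_left_cancel₀ hΔ
    rw [key, h]
    ring
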